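/- Let Λ be a proper topological k-graph. For each m ∈ ℕ^k, the subgroupoid H(m) = {(λx, 0, μx) ∈ 𝒢_Λ : d(λ) = d(μ) ≤ m} of the boundary-path groupoid is a proper groupoid, i.e., the map (r, s) : H(m) → 𝒢_Λ^{(0)} × 𝒢_Λ^{(0)} is proper. -/

import Mathlib

open Set

namespace TKG

/-- A topological `k`-graph: a small category with objects `Obj` and morphisms `Mor`,
a degree functor `d : Mor → ℕ^k` satisfying the unique factorization property, with
second-countable locally compact Hausdorff topologies making the structure maps suitably
continuous, the source map a local homeomorphism and composition continuous and open. -/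
structure TopKGraph (k : ℕ) (Obj Mor : Type)
    [TopologicalSpace Obj] [TopologicalSpace Mor] where
  r : Mor → Obj
  s : Mor → Obj
  ident : Obj → Mor
  comp : ∀ f g : Mor, s f = r g → Mor
  d : Mor → Fin k → ℕ
  r_ident : ∀ v, r (ident v) = v
  s_ident : ∀ v, s (ident v) = v
  d_ident : ∀ v, d (ident v) = 0
  r_comp : ∀ f g h, r (comp f g h) = r f
  s_comp : ∀ f g h, s (comp f g h) = s g
  d_comp : ∀ f g h, d (comp f g h) = d f + d g
  ident_comp : ∀ (f : Mor) (h : s (ident (r f)) = r f), comp (ident (r f)) f h = f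
  comp_ident : ∀ (f : Mor) (h : s f = r (ident (s f))), comp f (ident (s f)) h = f
  comp_assoc : ∀ (f g h : Mor) (hfg : s f = r g) (hgh : s g = r h)
    (h1 : s (comp f g hfg) = r h) (h2 : s f = r (comp g h hgh)),
    comp (comp f g hfg) h h1 = comp f (comp g h hgh) h2
  factor : ∀ (f : Mor) (m n : Fin k → ℕ), d f = m + n →
    ∃! gh : Mor × Mor, ∃ h : s gh.1 = r gh.2,
      comp gh.1 gh.2 h = f ∧ d gh.1 = m ∧ d gh.2 = n
  secondCountableObj : SecondCountableTopology Obj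
  secondCountableMor : SecondCountableTopology Mor
  locallyCompactObj : LocallyCompactSpace Obj
  locallyCompactMor : LocallyCompactSpace Mor
  t2Obj : T2Space Obj
  t2Mor : T2Space Mor
  continuous_r : Continuous r
  continuous_s : Continuous s
  isLocalHomeomorph_s : IsLocalHomeomorph s
  continuous_comp : Continuous fun p : {p : Mor × Mor // s p.1 = r p.2} => comp p.1.1 p.1.2 p.2
  isOpenMap_comp : IsOpenMap fun p : {p : Mor × Mor // s p.1 = r p.2} => comp p.1.1 p.1.2 p.2
  continuous_d : Continuous d

variable {k : ℕ} {Obj Mor : Type} [TopologicalSpace Obj] [TopologicalSpace Mor]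

/-- `Λ^{min}(λ,μ)`: the pairs `(α,β)` with `λα = μβ` and `d(λα) = d(λ) ⊔ d(μ)`. -/
def MinExt (Λ : TopKGraph k Obj Mor) (l m : Mor) : Set (Mor × Mor) :=
  {ab | ∃ (h1 : Λ.s l = Λ.r ab.1) (h2 : Λ.s m = Λ.r ab.2),
      Λ.comp l ab.1 h1 = Λ.comp m ab.2 h2 ∧ Λ.d l + Λ.d ab.1 = Λ.d l ⊔ Λ.d m}

/-- `E ∨ F`: the set of minimal common extensions of paths from `E` and from `F`. -/
def MCE (Λ : TopKGraph k Obj Mor) (E F : Set Mor) : Set Mor :=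
  {f | ∃ l ∈ E, ∃ m ∈ F, Λ.d f = Λ.d l ⊔ Λ.d m ∧
        (∃ (a : Mor) (h : Λ.s l = Λ.r a), Λ.comp l a h = f) ∧
        (∃ (b : Mor) (h : Λ.s m = Λ.r b), Λ.comp m b h = f)}

/-- `Λ` is compactly aligned: `U ∨ V` is compact for all compact `U ⊆ Λ^p`, `V ⊆ Λ^q`. -/
def CompactlyAligned (Λ : TopKGraph k Obj Mor) : Prop :=
  ∀ (p q : Fin k → ℕ) (U V : Set Mor), U ⊆ {f | Λ.d f = p} → V ⊆ {f | Λ.d f = q} →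
    IsCompact U → IsCompact V → IsCompact (MCE Λ U V)

/-- `Λ` is finitely aligned: `Λ^{min}(λ,μ)` is finite for all `λ, μ`. -/
def FinitelyAligned (Λ : TopKGraph k Obj Mor) : Prop :=
  ∀ l m : Mor, (MinExt Λ l m).Finite

/-- An element of the path space `X_Λ`: a degree-preserving functor from `Ω_{k,m}` to `Λ`,
recorded by its degree `m ∈ (ℕ ∪ {∞})^k` and its segments `x(p,q)` for `p ≤ q ≤ m`
(with a fixed junk value outside the domain, so that paths are determined by their
segments on their domain). -/
structure KPath (Λ : TopKGraph k Obj Mor) where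
  deg : Fin k → ℕ∞
  seg : (Fin k → ℕ) → (Fin k → ℕ) → Mor
  seg_junk : ∀ p q, ¬(p ≤ q ∧ ∀ i, (q i : ℕ∞) ≤ deg i) → seg p q = seg 0 0
  d_seg : ∀ p q, p ≤ q → (∀ i, (q i : ℕ∞) ≤ deg i) → Λ.d (seg p q) = q - p
  seg_comp : ∀ p q u, p ≤ q → q ≤ u → (∀ i, (u i : ℕ∞) ≤ deg i) →
    ∃ h : Λ.s (seg p q) = Λ.r (seg q u), Λ.comp (seg p q) (seg q u) h = seg p u
  seg_ident : ∀ p, (∀ i, (p i : ℕ∞) ≤ deg i) → seg p p = Λ.ident (Λ.r (seg p p))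

variable {Λ : TopKGraph k Obj Mor}

/-- `q` is in the domain of the path `x`, i.e. `q ≤ d(x)`. -/
def KPath.dom (x : KPath Λ) (q : Fin k → ℕ) : Prop := ∀ i, (q i : ℕ∞) ≤ x.deg i

/-- The range vertex `r(x) = x(0)` of a path. -/
def KPath.rng (x : KPath Λ) : Obj := Λ.r (x.seg 0 0)

/-- The vertex `x(m)` of a path. -/
def KPath.vtx (x : KPath Λ) (m : Fin k → ℕ) : Obj := Λ.r (x.seg m m)

/-- `y = σ^m x`, the shift of `x` by `m ≤ d(x)`. -/
def IsShiftOf (m : Fin k → ℕ) (x y : KPath Λ) : Prop :=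
  (∀ i, (m i : ℕ∞) ≤ x.deg i) ∧ (∀ i, y.deg i = x.deg i - (m i : ℕ∞)) ∧
  ∀ p q, p ≤ q → (∀ i, (q i : ℕ∞) ≤ y.deg i) → y.seg p q = x.seg (m + p) (m + q)

/-- `y = λ x`, the concatenation of the morphism `λ` with the path `x` (so `s(λ) = r(x)`),
characterized by `d(y) = d(λ) + d(x)`, `y(0,p)` an initial segment of `λ` for `p ≤ d(λ)`,
and `y(0,p) = λ ⬝ x(0, p - d(λ))` for `d(λ) ≤ p ≤ d(y)`. -/
def IsConcatOf (l : Mor) (x y : KPath Λ) : Prop :=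
  Λ.s l = x.rng ∧ (∀ i, y.deg i = (Λ.d l i : ℕ∞) + x.deg i) ∧
  (∀ p, p ≤ Λ.d l →
    ∃ (a : Mor) (h : Λ.s (y.seg 0 p) = Λ.r a),
      Λ.d (y.seg 0 p) = p ∧ Λ.comp (y.seg 0 p) a h = l) ∧
  (∀ p, Λ.d l ≤ p → (∀ i, (p i : ℕ∞) ≤ y.deg i) →
    ∃ h : Λ.s l = Λ.r (x.seg 0 (p - Λ.d l)),
      y.seg 0 p = Λ.comp l (x.seg 0 (p - Λ.d l)) h)

/-- `E` is exhaustive for a set `V` of vertices. -/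
def Exhaustive (Λ : TopKGraph k Obj Mor) (V : Set Obj) (E : Set Mor) : Prop :=
  ∀ l : Mor, Λ.r l ∈ V → ∃ m ∈ E, (MinExt Λ l m).Nonempty

/-- `v CE(Λ)`: compact sets `E` with `r(E)` a neighbourhood of `v` and `E` exhaustive
for `r(E)`. -/
def CE (Λ : TopKGraph k Obj Mor) (v : Obj) : Set (Set Mor) :=
  {E | IsCompact E ∧ Λ.r '' E ∈ nhds v ∧ Exhaustive Λ (Λ.r '' E) E}

/-- `x` is a boundary path: for every `m ≤ d(x)` and every `E ∈ x(m)CE(Λ)` there is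
`λ ∈ E` with `x(m, m + d(λ)) = λ`. -/
def IsBoundary (x : KPath Λ) : Prop :=
  ∀ m : Fin k → ℕ, x.dom m → ∀ E ∈ CE Λ (x.vtx m),
    ∃ l ∈ E, x.dom (m + Λ.d l) ∧ x.seg m (m + Λ.d l) = l

/-- `Z(W)`: the set of paths with an initial segment in `W`. -/
def ZSet (Λ : TopKGraph k Obj Mor) (W : Set Mor) : Set (KPath Λ) :=
  {x | ∃ l ∈ W, x.dom (Λ.d l) ∧ x.seg 0 (Λ.d l) = l}

/-- The topology on the path space `X_Λ`, generated by the sets `Z(U) ∩ Z(F)ᶜ` for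
`U ⊆ Λ` open and `F ⊆ Λ` compact. -/
def pathTopology (Λ : TopKGraph k Obj Mor) : TopologicalSpace (KPath Λ) :=
  TopologicalSpace.generateFrom
    {S | ∃ U F : Set Mor, IsOpen U ∧ IsCompact F ∧ S = ZSet Λ U ∩ (ZSet Λ F)ᶜ}

/-- The ambient space of triples for the path groupoid. -/
abbrev GTriple (Λ : TopKGraph k Obj Mor) : Type :=
  KPath Λ × (Fin k → ℤ) × KPath Λ

/-- The path groupoid `G_Λ` as a set of triples `(x, m, y)` such that `σ^p x = σ^q y`
for some `p ≤ d(x)`, `q ≤ d(y)` with `p - q = m`. -/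
def PathGroupoidCarrier (Λ : TopKGraph k Obj Mor) : Set (GTriple Λ) :=
  {t | ∃ p q : Fin k → ℕ, t.2.1 = (fun i => (p i : ℤ) - (q i : ℤ)) ∧
        ∃ z : KPath Λ, IsShiftOf p t.1 z ∧ IsShiftOf q t.2.2 z}

/-- `Z(F, m) = {(λx, d(λ)-d(μ), μx) : (λ,μ) ∈ F, d(λ)-d(μ) = m}`. -/
def ZG (Λ : TopKGraph k Obj Mor) (F : Set (Mor × Mor)) (m : Fin k → ℤ) :
    Set (GTriple Λ) :=
  {t | t.2.1 = m ∧ ∃ lm ∈ F, Λ.s lm.1 = Λ.s lm.2 ∧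
        (fun i => (Λ.d lm.1 i : ℤ) - (Λ.d lm.2 i : ℤ)) = m ∧
        ∃ x : KPath Λ, IsConcatOf lm.1 x t.1 ∧ IsConcatOf lm.2 x t.2.2}

/-- The topology on the path groupoid `G_Λ`, generated by the sets
`Z(U *ₛ V, m) ∩ Z(F, m)ᶜ` with `U, V` open and `F ⊆ Λ *ₛ Λ` compact. -/
def groupoidTopology (Λ : TopKGraph k Obj Mor) : TopologicalSpace (GTriple Λ) :=
  TopologicalSpace.generateFrom
    {S | ∃ (m : Fin k → ℤ) (U V : Set Mor) (F : Set (Mor × Mor)),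
      IsOpen U ∧ IsOpen V ∧ IsCompact F ∧
      S = ZG Λ ((U ×ˢ V) ∩ {lm | Λ.s lm.1 = Λ.s lm.2}) m ∩ (ZG Λ F m)ᶜ}

/-- A boundary path `x` is aperiodic if `σ^p x ≠ σ^q x` whenever `p ≠ q`,
`p, q ≤ d(x)`. -/
def Aperiodic (x : KPath Λ) : Prop :=
  ∀ p q : Fin k → ℕ, x.dom p → x.dom q → p ≠ q →
    ¬∃ z : KPath Λ, IsShiftOf p x z ∧ IsShiftOf q x z

/-- `Λ` is proper: `U Λ^m` is compact for every compact `U ⊆ Λ^0` and `m ∈ ℕ^k`. -/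
def ProperGraph (Λ : TopKGraph k Obj Mor) : Prop :=
  ∀ (m : Fin k → ℕ) (U : Set Obj), IsCompact U →
    IsCompact {f : Mor | Λ.d f = m ∧ Λ.r f ∈ U}

/-- `Λ` has no sources: every vertex receives an edge of each degree `e_i`. -/
def NoSources (Λ : TopKGraph k Obj Mor) : Prop :=
  ∀ (v : Obj) (i : Fin k), ∃ f : Mor, Λ.d f = Pi.single i 1 ∧ Λ.r f = v

/-- The set `Ext(E; F)` of minimal extenders of `E` by `F`. -/
def ExtSet (Λ : TopKGraph k Obj Mor) (E F : Set Mor) : Set Mor :=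
  {a | ∃ l ∈ E, ∃ m ∈ F, ∃ b : Mor, (a, b) ∈ MinExt Λ l m}

end TKG

open TKG in
/-- The subgroupoid `H(m) = {(λx, 0, μx) ∈ 𝒢_Λ : d(λ) = d(μ) ≤ m}` of the boundary-path
groupoid of a proper topological `k`-graph. -/
def Hset {k : ℕ} {Obj Mor : Type} [TopologicalSpace Obj] [TopologicalSpace Mor]
    (Λ : TKG.TopKGraph k Obj Mor) (m : Fin k → ℕ) : Set (TKG.GTriple Λ) :=
  {t | t ∈ TKG.PathGroupoidCarrier Λ ∧ TKG.IsBoundary t.1 ∧ TKG.IsBoundary t.2.2 ∧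
       t.2.1 = 0 ∧
       ∃ (l mu : Mor) (x : TKG.KPath Λ), Λ.d l = Λ.d mu ∧ Λ.d l ≤ m ∧
         TKG.IsConcatOf l x t.1 ∧ TKG.IsConcatOf mu x t.2.2}



section Aux
open TKG Filter Topology TopologicalSpace

variable {k : ℕ} {Obj Mor : Type} [TopologicalSpace Obj] [TopologicalSpace Mor]
variable {Λ : TopKGraph k Obj Mor}

/-! ### Unique factorization machinery -/

open Classical in
noncomputable def fac (Λ : TopKGraph k Obj Mor) (p q : Fin k → ℕ) (f : Mor) : Mor × Mor :=
  if h : Λ.d f = p + q then (Λ.factor f p q h).exists.choose else (f, f)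

lemma fac_spec {p q : Fin k → ℕ} {f : Mor} (h : Λ.d f = p + q) :
    ∃ e : Λ.s (fac Λ p q f).1 = Λ.r (fac Λ p q f).2,
      Λ.comp (fac Λ p q f).1 (fac Λ p q f).2 e = f ∧
      Λ.d (fac Λ p q f).1 = p ∧ Λ.d (fac Λ p q f).2 = q := by
  have : fac Λ p q f = (Λ.factor f p q h).exists.choose := by
    simp only [fac]; rw [dif_pos h]
  rw [this]
  exact (Λ.factor f p q h).exists.choose_spec

lemma fac_eq {p q : Fin k → ℕ} {f : Mor} (hd : Λ.d f = p + q) {g h : Mor}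
    {e : Λ.s g = Λ.r h} (hc : Λ.comp g h e = f) (hg : Λ.d g = p) (hh : Λ.d h = q) :
    fac Λ p q f = (g, h) :=
  (Λ.factor f p q hd).unique (fac_spec hd) ⟨e, hc, hg, hh⟩

lemma factor_pair_unique {g1 h1 g2 h2 : Mor} {e1 : Λ.s g1 = Λ.r h1} {e2 : Λ.s g2 = Λ.r h2}
    (hc : Λ.comp g1 h1 e1 = Λ.comp g2 h2 e2) (hg : Λ.d g1 = Λ.d g2) (hh : Λ.d h1 = Λ.d h2) :
    g1 = g2 ∧ h1 = h2 := by
  have hd : Λ.d (Λ.comp g2 h2 e2) = Λ.d g2 + Λ.d h2 := Λ.d_comp _ _ _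
  have h1e := fac_eq hd hc hg hh
  have h2e := fac_eq hd rfl rfl rfl
  have h12 := h1e.symm.trans h2e
  exact ⟨congrArg Prod.fst h12, congrArg Prod.snd h12⟩

lemma comp_congr {f1 f2 g1 g2 : Mor} (hf : f1 = f2) (hg : g1 = g2)
    (h1 : Λ.s f1 = Λ.r g1) (h2 : Λ.s f2 = Λ.r g2) :
    Λ.comp f1 g1 h1 = Λ.comp f2 g2 h2 := by subst hf; subst hg; rfl

/-! ### Basic path lemmas -/

lemma pi_zero_le (p : Fin k → ℕ) : (0 : Fin k → ℕ) ≤ p := fun i => Nat.zero_le _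

lemma dom_mono {x : KPath Λ} {p q : Fin k → ℕ} (h : p ≤ q) (hq : x.dom q) : x.dom p :=
  fun i => le_trans (by exact_mod_cast Nat.cast_le.mpr (h i)) (hq i)

lemma dom_sup {x : KPath Λ} {p q : Fin k → ℕ} (hp : x.dom p) (hq : x.dom q) :
    x.dom (p ⊔ q) := by
  intro i
  rcases le_total (p i) (q i) with h | h
  · have : (p ⊔ q) i = q i := sup_eq_right.mpr h
    rw [this]; exact hq i
  · have : (p ⊔ q) i = p i := sup_eq_left.mpr h
    rw [this]; exact hp i

lemma dom_of_deg_eq {x y : KPath Λ} (h : ∀ i, y.deg i = x.deg i) {u : Fin k → ℕ}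
    (hx : x.dom u) : y.dom u := fun i => (h i) ▸ hx i

lemma d_seg' (x : KPath Λ) {p q : Fin k → ℕ} (hpq : p ≤ q) (hq : x.dom q) :
    Λ.d (x.seg p q) = q - p := x.d_seg p q hpq hq

lemma d_seg0 (x : KPath Λ) {p : Fin k → ℕ} (hp : x.dom p) : Λ.d (x.seg 0 p) = p := by
  rw [x.d_seg 0 p (pi_zero_le p) hp]
  funext i
  exact Nat.sub_zero _

lemma r_seg0 (x : KPath Λ) {p : Fin k → ℕ} (hp : x.dom p) :
    Λ.r (x.seg 0 p) = Λ.r (x.seg 0 0) := by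
  obtain ⟨h, hc⟩ := x.seg_comp 0 0 p (le_refl _) (pi_zero_le p) hp
  rw [← hc, Λ.r_comp]

lemma s_seg_left (x : KPath Λ) {p u : Fin k → ℕ} (hpu : p ≤ u) (hu : x.dom u) :
    Λ.s (x.seg 0 u) = Λ.s (x.seg p u) := by
  obtain ⟨h, hc⟩ := x.seg_comp 0 p u (pi_zero_le p) hpu hu
  rw [← hc, Λ.s_comp]

lemma s_eq_r_mid (x : KPath Λ) {p u : Fin k → ℕ} (hpu : p ≤ u) (hu : x.dom u) :
    Λ.s (x.seg 0 p) = Λ.r (x.seg p u) :=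
  (x.seg_comp 0 p u (pi_zero_le p) hpu hu).choose

end Aux
section Aux2
open TKG Filter Topology TopologicalSpace

variable {k : ℕ} {Obj Mor : Type} [TopologicalSpace Obj] [TopologicalSpace Mor]
variable {Λ : TopKGraph k Obj Mor}

/-- Equality of the tails of `x` and `y` from position `p` on. -/
def TailsEq (p : Fin k → ℕ) (x y : KPath Λ) : Prop :=
  ∀ u, p ≤ u → x.dom u → y.seg p u = x.seg p u

lemma tails_eq_interior {x y : KPath Λ} {n : Fin k → ℕ} (ht : TailsEq n x y)
    {a b : Fin k → ℕ} (hna : n ≤ a) (hab : a ≤ b) (hxb : x.dom b) (hyb : y.dom b) :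
    y.seg a b = x.seg a b := by
  obtain ⟨hy1, hy2⟩ := y.seg_comp n a b hna hab hyb
  obtain ⟨hx1, hx2⟩ := x.seg_comp n a b hna hab hxb
  have hxa : x.dom a := dom_mono hab hxb
  have hya : y.dom a := dom_mono hab hyb
  have hna' : y.seg n a = x.seg n a := ht a hna hxa
  have hnb' : y.seg n b = x.seg n b := ht b (hna.trans hab) hxb
  exact (factor_pair_unique (e1 := hy1) (e2 := hx1)
    (hc := by rw [hy2, hx2, hnb'])
    (hg := by rw [y.d_seg n a hna hya, x.d_seg n a hna hxa])
    (hh := by rw [y.d_seg a b hab hyb, x.d_seg a b hab hxb])).2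

lemma tails_eq_from {x y : KPath Λ} {n p' : Fin k → ℕ}
    (hdeg : ∀ i, y.deg i = x.deg i) (hxn : x.dom n) (ht : TailsEq n x y)
    (hsup : y.seg p' (p' ⊔ n) = x.seg p' (p' ⊔ n)) : TailsEq p' x y := by
  have step : ∀ u, p' ≤ u → n ≤ u → x.dom u → y.seg p' u = x.seg p' u := by
    intro u hpu hnu hxu
    have hyu : y.dom u := dom_of_deg_eq hdeg hxu
    have h1 : p' ⊔ n ≤ u := sup_le hpu hnu
    obtain ⟨ey, ecy⟩ := y.seg_comp p' (p' ⊔ n) u le_sup_left h1 hyu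
    obtain ⟨ex, ecx⟩ := x.seg_comp p' (p' ⊔ n) u le_sup_left h1 hxu
    have hmid : y.seg (p' ⊔ n) u = x.seg (p' ⊔ n) u :=
      tails_eq_interior ht le_sup_right h1 hxu hyu
    rw [← ecy, ← ecx]
    exact comp_congr hsup hmid ey ex
  intro u hpu hxu
  have hyu : y.dom u := dom_of_deg_eq hdeg hxu
  have hun : u ≤ u ⊔ n := le_sup_left
  have hxun : x.dom (u ⊔ n) := dom_sup hxu hxn
  have hyun : y.dom (u ⊔ n) := dom_of_deg_eq hdeg hxun
  have h1 : y.seg p' (u ⊔ n) = x.seg p' (u ⊔ n) :=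
    step (u ⊔ n) (hpu.trans hun) le_sup_right hxun
  obtain ⟨ey, ecy⟩ := y.seg_comp p' u (u ⊔ n) hpu hun hyun
  obtain ⟨ex, ecx⟩ := x.seg_comp p' u (u ⊔ n) hpu hun hxun
  exact (factor_pair_unique (e1 := ey) (e2 := ex)
    (hc := ecy.trans (h1.trans ecx.symm))
    (hg := by rw [y.d_seg p' u hpu hyu, x.d_seg p' u hpu hxu])
    (hh := by rw [y.d_seg u (u ⊔ n) hun hyun, x.d_seg u (u ⊔ n) hun hxun])).1

/-! ### Concatenation head and tail -/

lemma concat_head {l : Mor} {x y : KPath Λ} (h : IsConcatOf l x y) :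
    y.dom (Λ.d l) ∧ y.seg 0 (Λ.d l) = l := by
  obtain ⟨hs, hdeg, h3, h4⟩ := h
  have hdom : y.dom (Λ.d l) := fun i => by rw [hdeg i]; exact le_self_add
  obtain ⟨a, ha, hda, hca⟩ := h3 (Λ.d l) (le_refl _)
  have hda0 : Λ.d a = 0 := by
    have hdc := Λ.d_comp (y.seg 0 (Λ.d l)) a ha
    rw [hca, hda] at hdc
    funext i
    have h2 := congrFun hdc i
    simp only [Pi.add_apply] at h2
    simp only [Pi.zero_apply]
    omega
  have h' : Λ.s l = Λ.r (Λ.ident (Λ.s l)) := (Λ.r_ident _).symm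
  have hpair := factor_pair_unique (e1 := ha) (e2 := h')
    (hc := by rw [hca, Λ.comp_ident l h'])
    (hg := hda)
    (hh := by rw [hda0, Λ.d_ident])
  exact ⟨hdom, hpair.1⟩

lemma concat_tail {l : Mor} {x y : KPath Λ} (h : IsConcatOf l x y) {u : Fin k → ℕ}
    (hu : Λ.d l ≤ u) (hyu : y.dom u) :
    x.dom (u - Λ.d l) ∧ y.seg (Λ.d l) u = x.seg 0 (u - Λ.d l) := by
  obtain ⟨hs, hdeg, h3, h4⟩ := h
  have hxd : x.dom (u - Λ.d l) := by
    intro i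
    have h1 := hyu i
    rw [hdeg i] at h1
    have hc : ((u - Λ.d l) i : ℕ∞) = (u i : ℕ∞) - (Λ.d l i : ℕ∞) := by
      simp only [Pi.sub_apply]
      exact_mod_cast (ENat.coe_sub (u i) (Λ.d l i))
    rw [hc]
    exact tsub_le_iff_left.mpr h1
  obtain ⟨hh4, hc4⟩ := h4 u hu hyu
  have hhead := concat_head ⟨hs, hdeg, h3, h4⟩
  obtain ⟨e1, ec1⟩ := y.seg_comp 0 (Λ.d l) u (pi_zero_le _) hu hyu
  have hpair := factor_pair_unique (e1 := e1) (e2 := hh4)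
    (hc := by rw [ec1, hc4])
    (hg := by rw [hhead.2])
    (hh := by
      rw [y.d_seg (Λ.d l) u hu hyu, d_seg0 x hxd])
  exact ⟨hxd, hpair.2⟩

end Aux2
section Aux3
open TKG Filter Topology TopologicalSpace

variable {k : ℕ} {Obj Mor : Type} [TopologicalSpace Obj] [TopologicalSpace Mor]
variable {Λ : TopKGraph k Obj Mor}

lemma enat_add_le {a b : ℕ} {D : ℕ∞} (ha : (a : ℕ∞) ≤ D) (hb : (b : ℕ∞) ≤ D - a) :
    ((a + b : ℕ) : ℕ∞) ≤ D := by
  push_cast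
  calc (a : ℕ∞) + b ≤ a + (D - a) := add_le_add_right hb _
  _ = D := add_tsub_cancel_of_le ha

lemma enat_sub_le_sub {a : ℕ} {b : ℕ∞} {D E : ℕ∞} (h : b ≤ D) :
    b - (a : ℕ∞) ≤ D - a := tsub_le_tsub_right h _

open Classical in
noncomputable def shiftPath (x : KPath Λ) (n : Fin k → ℕ) (hx : x.dom n) : KPath Λ where
  deg i := x.deg i - (n i : ℕ∞)
  seg p q :=
    if p ≤ q ∧ ∀ i, (q i : ℕ∞) ≤ x.deg i - (n i : ℕ∞) then x.seg (n + p) (n + q)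
    else x.seg n n
  seg_junk p q h := by
    rw [if_neg h, if_pos ⟨le_refl _, fun i => by simp⟩, add_zero]
  d_seg p q hpq hq := by
    rw [if_pos ⟨hpq, hq⟩,
      x.d_seg (n + p) (n + q) (fun i => Nat.add_le_add_left (hpq i) _)
        (fun i => enat_add_le (hx i) (hq i))]
    funext i
    simp only [Pi.sub_apply, Pi.add_apply]
    omega
  seg_comp p q u hpq hqu hu := by
    have hq : ∀ i, (q i : ℕ∞) ≤ x.deg i - (n i : ℕ∞) :=
      fun i => le_trans (Nat.cast_le.mpr (hqu i)) (hu i)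
    rw [if_pos ⟨hpq, hq⟩, if_pos ⟨hqu, hu⟩, if_pos ⟨hpq.trans hqu, hu⟩]
    exact x.seg_comp (n + p) (n + q) (n + u) (fun i => Nat.add_le_add_left (hpq i) _)
      (fun i => Nat.add_le_add_left (hqu i) _) (fun i => enat_add_le (hx i) (hu i))
  seg_ident p hp := by
    rw [if_pos ⟨le_refl p, hp⟩]
    exact x.seg_ident (n + p) (fun i => enat_add_le (hx i) (hp i))

lemma shiftPath_deg (x : KPath Λ) (n : Fin k → ℕ) (hx : x.dom n) (i : Fin k) :
    (shiftPath x n hx).deg i = x.deg i - (n i : ℕ∞) := rfl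

lemma shiftPath_seg (x : KPath Λ) (n : Fin k → ℕ) (hx : x.dom n) {p q : Fin k → ℕ}
    (h1 : p ≤ q) (h2 : ∀ i, (q i : ℕ∞) ≤ x.deg i - (n i : ℕ∞)) :
    (shiftPath x n hx).seg p q = x.seg (n + p) (n + q) := by
  simp only [shiftPath]
  rw [if_pos ⟨h1, h2⟩]

lemma shiftPath_isShiftOf (x : KPath Λ) (n : Fin k → ℕ) (hx : x.dom n) :
    IsShiftOf n x (shiftPath x n hx) :=
  ⟨hx, fun _ => rfl, fun p q h1 h2 => shiftPath_seg x n hx h1 h2⟩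

lemma shiftPath_isShiftOf' {x y : KPath Λ} {n : Fin k → ℕ} (hx : x.dom n)
    (hdeg : ∀ i, y.deg i = x.deg i) (ht : TailsEq n x y) :
    IsShiftOf n y (shiftPath x n hx) := by
  refine ⟨dom_of_deg_eq hdeg hx, fun i => by rw [shiftPath_deg, hdeg i], ?_⟩
  intro p q h1 h2
  rw [shiftPath_seg x n hx h1 h2]
  have hdq : x.dom (n + q) := fun i => enat_add_le (hx i) (h2 i)
  exact (tails_eq_interior ht (fun i => Nat.le_add_right _ _)
    (fun i => Nat.add_le_add_left (h1 i) _) hdq (dom_of_deg_eq hdeg hdq)).symm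

lemma shiftPath_rng (x : KPath Λ) (n : Fin k → ℕ) (hx : x.dom n) :
    (shiftPath x n hx).rng = Λ.r (x.seg n n) := by
  show Λ.r ((shiftPath x n hx).seg 0 0) = _
  rw [shiftPath_seg x n hx (le_refl _) (fun i => by simp), add_zero]

lemma concat_of_tail {x y : KPath Λ} {n : Fin k → ℕ} (hx : x.dom n) (hy : y.dom n)
    (hdeg : ∀ i, y.deg i = x.deg i) (ht : TailsEq n x y) :
    IsConcatOf (y.seg 0 n) (shiftPath x n hx) y := by
  have hdl : Λ.d (y.seg 0 n) = n := d_seg0 y hy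
  refine ⟨?_, ?_, ?_, ?_⟩
  · rw [shiftPath_rng]
    have h1 : Λ.s (y.seg 0 n) = Λ.r (y.seg n n) := s_eq_r_mid y (le_refl n) hy
    rw [h1, ht n (le_refl n) hx]
  · intro i
    rw [hdl, shiftPath_deg, hdeg i]
    exact (add_tsub_cancel_of_le (hx i)).symm
  · intro p hp
    rw [hdl] at hp
    obtain ⟨e, ec⟩ := y.seg_comp 0 p n (pi_zero_le p) hp hy
    exact ⟨y.seg p n, e, d_seg0 y (dom_mono hp hy), ec⟩
  · intro p hp hpdom
    rw [hdl] at hp ⊢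
    have hxp : x.dom p := fun i => by rw [← hdeg i]; exact hpdom i
    have hcond : ∀ i, (((p - n) i : ℕ) : ℕ∞) ≤ x.deg i - (n i : ℕ∞) := by
      intro i
      have hcs : (((p - n) i : ℕ) : ℕ∞) = (p i : ℕ∞) - (n i : ℕ∞) := by
        simp only [Pi.sub_apply]
        exact_mod_cast (ENat.coe_sub (p i) (n i)).symm
      rw [hcs]
      exact tsub_le_tsub_right (hxp i) _
    have hseg : (shiftPath x n hx).seg 0 (p - n) = x.seg n p := by
      rw [shiftPath_seg x n hx (pi_zero_le _) hcond, add_zero,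
        show n + (p - n) = p from funext fun i => Nat.add_sub_cancel' (hp i)]
    have hyn_p : y.seg n p = x.seg n p := ht p hp hxp
    obtain ⟨e, ec⟩ := y.seg_comp 0 n p (pi_zero_le n) hp hpdom
    have hw : Λ.s (y.seg 0 n) = Λ.r ((shiftPath x n hx).seg 0 (p - n)) := by
      rw [hseg, ← hyn_p]; exact e
    refine ⟨hw, ?_⟩
    rw [← ec]
    exact comp_congr rfl (by rw [hseg, hyn_p]) e hw

lemma tailsEq_refl (x : KPath Λ) (n : Fin k → ℕ) : TailsEq n x x := fun _ _ _ => rfl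

end Aux3
section Aux4
open TKG Filter Topology TopologicalSpace

variable {k : ℕ} {Obj Mor : Type} [TopologicalSpace Obj] [TopologicalSpace Mor]
variable {Λ : TopKGraph k Obj Mor}

/-- The key structure of elements of `H(m)` at level `n`. -/
def Good (n : Fin k → ℕ) (t : GTriple Λ) : Prop :=
  (∀ i, t.1.deg i = t.2.2.deg i) ∧ t.1.dom n ∧ TailsEq n t.1 t.2.2

lemma good_of_mem {t : GTriple Λ} {m : Fin k → ℕ} (h : t ∈ Hset Λ m) :
    ∃ n, n ≤ m ∧ Good n t := by
  obtain ⟨hPG, hb1, hb2, h0, l, mu, x, hdlm, hdm, hc1, hc2⟩ := h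
  have hde : ∀ i, t.1.deg i = t.2.2.deg i := by
    intro i; rw [hc1.2.1 i, hc2.2.1 i, hdlm]
  refine ⟨Λ.d l, hdm, hde, ?_, ?_⟩
  · intro i; rw [hc1.2.1 i]; exact le_self_add
  · intro u hu hdomu
    have hd2 : t.2.2.dom u := dom_of_deg_eq (fun i => (hde i).symm) hdomu
    have h1 := (concat_tail hc1 hu hdomu).2
    have h2 : t.2.2.seg (Λ.d l) u = x.seg 0 (u - Λ.d l) := by
      rw [hdlm]
      exact (concat_tail hc2 (by rw [← hdlm]; exact hu) hd2).2
    exact h2.trans h1.symm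

lemma mem_ZG_of {W : Set (Mor × Mor)} {t : GTriple Λ} (h0 : t.2.1 = 0) {p : Fin k → ℕ}
    (hdx : t.1.dom p) (hdy : t.2.2.dom p) (hdeg : ∀ i, t.1.deg i = t.2.2.deg i)
    (ht : TailsEq p t.1 t.2.2) (hW : (t.1.seg 0 p, t.2.2.seg 0 p) ∈ W) :
    t ∈ ZG Λ W 0 := by
  refine ⟨h0, (t.1.seg 0 p, t.2.2.seg 0 p), hW, ?_, ?_,
    shiftPath t.1 p hdx, ?_, ?_⟩
  · have h1 : Λ.s (t.1.seg 0 p) = Λ.r (t.1.seg p p) := s_eq_r_mid t.1 (le_refl p) hdx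
    have h2 : Λ.s (t.2.2.seg 0 p) = Λ.r (t.2.2.seg p p) := s_eq_r_mid t.2.2 (le_refl p) hdy
    show Λ.s (t.1.seg 0 p) = Λ.s (t.2.2.seg 0 p)
    rw [h1, h2, ht p (le_refl p) hdx]
  · show (fun i => ((Λ.d (t.1.seg 0 p) i : ℤ)) - (Λ.d (t.2.2.seg 0 p) i : ℤ)) = 0
    funext i
    rw [d_seg0 t.1 hdx, d_seg0 t.2.2 hdy]
    simp
  · exact concat_of_tail hdx hdx (fun _ => rfl) (tailsEq_refl _ _)
  · exact concat_of_tail hdx hdy (fun i => (hdeg i).symm) ht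

lemma of_mem_ZG {W : Set (Mor × Mor)} {t : GTriple Λ} (h : t ∈ ZG Λ W 0) :
    ∃ p : Fin k → ℕ, t.1.dom p ∧ t.2.2.dom p ∧ (∀ i, t.1.deg i = t.2.2.deg i) ∧
      TailsEq p t.1 t.2.2 ∧ (t.1.seg 0 p, t.2.2.seg 0 p) ∈ W ∧ t.2.1 = 0 := by
  obtain ⟨h0, lm, hlm, hs, hdz, x, hc1, hc2⟩ := h
  have hdeq : Λ.d lm.1 = Λ.d lm.2 := by
    funext i
    have h1 := congrFun hdz i
    simp only [Pi.zero_apply] at h1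
    omega
  refine ⟨Λ.d lm.1, (concat_head hc1).1, ?_, ?_, ?_, ?_, h0⟩
  · rw [hdeq]; exact (concat_head hc2).1
  · intro i; rw [hc1.2.1 i, hc2.2.1 i, hdeq]
  · intro u hu hdomu
    have hde : ∀ i, t.2.2.deg i = t.1.deg i := fun i => by
      rw [hc1.2.1 i, hc2.2.1 i, hdeq]
    have hd2 : t.2.2.dom u := dom_of_deg_eq hde hdomu
    have h1 := (concat_tail hc1 hu hdomu).2
    have h2 : t.2.2.seg (Λ.d lm.1) u = x.seg 0 (u - Λ.d lm.1) := by
      rw [hdeq]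
      exact (concat_tail hc2 (by rw [← hdeq]; exact hu) hd2).2
    exact h2.trans h1.symm
  · rw [(concat_head hc1).2]
    have h2 : t.2.2.seg 0 (Λ.d lm.1) = lm.2 := by rw [hdeq]; exact (concat_head hc2).2
    rw [h2]
    exact hlm

lemma mem_Hset_of_good {t : GTriple Λ} {m n : Fin k → ℕ} (hnm : n ≤ m) (hg : Good n t)
    (h0 : t.2.1 = 0) (hb1 : IsBoundary t.1) (hb2 : IsBoundary t.2.2) : t ∈ Hset Λ m := by
  obtain ⟨hdeg, hdx, ht⟩ := hg
  have hdy : t.2.2.dom n := dom_of_deg_eq (fun i => (hdeg i).symm) hdx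
  refine ⟨⟨n, n, by rw [h0]; funext i; simp, shiftPath t.1 n hdx,
      shiftPath_isShiftOf t.1 n hdx, shiftPath_isShiftOf' hdx (fun i => (hdeg i).symm) ht⟩,
    hb1, hb2, h0, t.1.seg 0 n, t.2.2.seg 0 n, shiftPath t.1 n hdx, ?_, ?_, ?_, ?_⟩
  · rw [d_seg0 t.1 hdx, d_seg0 t.2.2 hdy]
  · rw [d_seg0 t.1 hdx]; exact hnm
  · exact concat_of_tail hdx hdx (fun _ => rfl) (tailsEq_refl _ _)
  · exact concat_of_tail hdx hdy (fun i => (hdeg i).symm) ht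

end Aux4
section Aux5
open TKG Filter Topology TopologicalSpace

variable {k : ℕ} {Obj Mor : Type} [TopologicalSpace Obj] [TopologicalSpace Mor]
variable {Λ : TopKGraph k Obj Mor}

lemma ZSet_empty : ZSet Λ (∅ : Set Mor) = ∅ := by
  ext x; simp [ZSet]

lemma isOpen_basic {U F : Set Mor} (hU : IsOpen U) (hF : IsCompact F) :
    @IsOpen _ (pathTopology Λ) (ZSet Λ U ∩ (ZSet Λ F)ᶜ) :=
  isOpen_generateFrom_of_mem ⟨U, F, hU, hF, rfl⟩

lemma isOpen_ZSet {U : Set Mor} (hU : IsOpen U) :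
    @IsOpen _ (pathTopology Λ) (ZSet Λ U) := by
  have h : ZSet Λ U = ZSet Λ U ∩ (ZSet Λ (∅ : Set Mor))ᶜ := by
    rw [ZSet_empty, compl_empty, inter_univ]
  rw [h]
  exact isOpen_basic hU isCompact_empty

lemma ZSet_seg_eq (W : Set Mor) (p : Fin k → ℕ) :
    ZSet Λ (W ∩ Λ.d ⁻¹' {p}) = {x : KPath Λ | x.dom p ∧ x.seg 0 p ∈ W} := by
  ext x
  constructor
  · rintro ⟨l, ⟨hlW, hlp⟩, hdom, hseg⟩
    have hlp' : Λ.d l = p := hlp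
    rw [hlp'] at hdom hseg
    exact ⟨hdom, by rw [hseg]; exact hlW⟩
  · rintro ⟨hdom, hW⟩
    exact ⟨x.seg 0 p, ⟨hW, d_seg0 x hdom⟩, by rw [d_seg0 x hdom]; exact hdom,
      by rw [d_seg0 x hdom]⟩

lemma mem_nhds_path {S : Set (KPath Λ)} {x : KPath Λ} (hS : @IsOpen _ (pathTopology Λ) S)
    (hx : x ∈ S) : S ∈ @nhds _ (pathTopology Λ) x :=
  letI := pathTopology Λ
  hS.mem_nhds hx

lemma tendsto_seg_zero {α : Type*} {l : Filter α} {φ : α → KPath Λ} {xL : KPath Λ}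
    (h : Tendsto φ l (@nhds _ (pathTopology Λ) xL)) {p : Fin k → ℕ} (hdom : xL.dom p) :
    Tendsto (fun a => (φ a).seg 0 p) l (𝓝 (xL.seg 0 p)) ∧ ∀ᶠ a in l, (φ a).dom p := by
  have key : ∀ W : Set Mor, IsOpen W → xL.seg 0 p ∈ W →
      ∀ᶠ a in l, (φ a).dom p ∧ (φ a).seg 0 p ∈ W := by
    intro W hW hmem
    have hZ : @IsOpen _ (pathTopology Λ) (ZSet Λ (W ∩ Λ.d ⁻¹' {p})) :=
      isOpen_ZSet (hW.inter ((isOpen_discrete _).preimage Λ.continuous_d))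
    have hx : xL ∈ ZSet Λ (W ∩ Λ.d ⁻¹' {p}) := by
      rw [ZSet_seg_eq]; exact ⟨hdom, hmem⟩
    have hev : ∀ᶠ a in l, φ a ∈ ZSet Λ (W ∩ Λ.d ⁻¹' {p}) := h (mem_nhds_path hZ hx)
    exact hev.mono (fun a ha => by rwa [ZSet_seg_eq] at ha)
  constructor
  · refine (nhds_basis_opens (xL.seg 0 p)).tendsto_right_iff.mpr ?_
    rintro W ⟨hmem, hW⟩
    exact (key W hW hmem).mono (fun a ha => ha.2)
  · exact (key univ isOpen_univ (mem_univ _)).mono (fun a ha => ha.1)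

lemma dom_of_limit (hp : ProperGraph Λ) {l : Filter (KPath Λ)} [hne : l.NeBot] {xL : KPath Λ}
    (hconv : l ≤ @nhds _ (pathTopology Λ) xL) {n : Fin k → ℕ}
    (hae : ∀ᶠ x in l, x.dom n) : xL.dom n := by
  by_contra hcon
  unfold KPath.dom at hcon
  push_neg at hcon
  obtain ⟨i0, hi0⟩ := hcon
  have hi0' : ¬ ((n i0 : ℕ∞) ≤ xL.deg i0) := not_le_of_gt hi0
  classical
  set q : Fin k → ℕ := fun j => if (n j : ℕ∞) ≤ xL.deg j then n j else (xL.deg j).toNat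
    with hq
  have hqn : q ≤ n := by
    intro j
    rw [hq]; dsimp only
    split_ifs with h
    · exact le_refl _
    · have hlt : xL.deg j < (n j : ℕ∞) := lt_of_not_ge h
      have hne' : xL.deg j ≠ ⊤ := ne_top_of_lt hlt
      have h2 : ((xL.deg j).toNat : ℕ∞) < (n j : ℕ∞) := by
        rw [ENat.coe_toNat hne']; exact hlt
      exact le_of_lt (Nat.cast_lt.mp h2)
  have hqdom : xL.dom q := by
    intro j
    rw [hq]; dsimp only
    split_ifs with h
    · exact h
    · rw [ENat.coe_toNat (ne_top_of_lt (lt_of_not_ge h))]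
  have hqi0lt : q i0 < n i0 := by
    have : q i0 = (xL.deg i0).toNat := by rw [hq]; dsimp only; rw [if_neg hi0']
    rw [this]
    have h2 : ((xL.deg i0).toNat : ℕ∞) < (n i0 : ℕ∞) := by
      rw [ENat.coe_toNat (ne_top_of_lt hi0)]; exact hi0
    exact Nat.cast_lt.mp h2
  have hdegi0 : (q i0 : ℕ∞) = xL.deg i0 := by
    have : q i0 = (xL.deg i0).toNat := by rw [hq]; dsimp only; rw [if_neg hi0']
    rw [this]
    exact ENat.coe_toNat (ne_top_of_lt hi0)
  set q' : Fin k → ℕ := Function.update q i0 (q i0 + 1) with hq'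
  have hq'n : q' ≤ n := by
    intro j
    rw [hq']
    rcases eq_or_ne j i0 with rfl | hj
    · rw [Function.update_self]; exact hqi0lt
    · rw [Function.update_of_ne hj]; exact hqn j
  have hqq' : q ≤ q' := by
    intro j
    rw [hq']
    rcases eq_or_ne j i0 with rfl | hj
    · rw [Function.update_self]; exact Nat.le_succ _
    · rw [Function.update_of_ne hj]
  have hq'not : ¬ xL.dom q' := by
    intro hd
    have h3 := hd i0
    rw [hq', Function.update_self, ← hdegi0] at h3
    have h4 : (q i0 + 1 : ℕ) ≤ q i0 := by exact_mod_cast h3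
    omega
  haveI := Λ.locallyCompactMor
  obtain ⟨N, hNc, hNn⟩ := exists_compact_mem_nhds (xL.seg 0 q)
  set U : Set Mor := interior N ∩ Λ.d ⁻¹' {q} with hU
  have hUopen : IsOpen U :=
    isOpen_interior.inter ((isOpen_discrete _).preimage Λ.continuous_d)
  set F : Set Mor := {f | Λ.d f = q' ∧ Λ.r f ∈ Λ.r '' N} with hF
  have hFc : IsCompact F := hp q' (Λ.r '' N) (hNc.image Λ.continuous_r)
  have hxU : xL ∈ ZSet Λ U := by
    refine ⟨xL.seg 0 q, ⟨mem_interior_iff_mem_nhds.mpr hNn, d_seg0 xL hqdom⟩, ?_, ?_⟩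
    · rw [d_seg0 xL hqdom]; exact hqdom
    · rw [d_seg0 xL hqdom]
  have hxF : xL ∉ ZSet Λ F := by
    rintro ⟨f, ⟨hdf, _⟩, hdomf, _⟩
    rw [hdf] at hdomf
    exact hq'not hdomf
  have hG : @IsOpen _ (pathTopology Λ) (ZSet Λ U ∩ (ZSet Λ F)ᶜ) := isOpen_basic hUopen hFc
  have hGmem : ∀ᶠ x in l, x ∈ ZSet Λ U ∩ (ZSet Λ F)ᶜ := hconv (mem_nhds_path hG ⟨hxU, hxF⟩)
  have hfalse : ∀ᶠ _x in l, False := by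
    filter_upwards [hGmem, hae] with x hGx hdomx
    obtain ⟨hxZU, hxZF⟩ := hGx
    obtain ⟨lw, ⟨hlN, hlq⟩, hldom, hlseg⟩ := hxZU
    have hlq2 : Λ.d lw = q := hlq
    rw [hlq2] at hldom hlseg
    have hdq' : x.dom q' := dom_mono hq'n hdomx
    refine hxZF ⟨x.seg 0 q', ⟨d_seg0 x hdq', ?_⟩, ?_, ?_⟩
    · have hrr : Λ.r (x.seg 0 q') = Λ.r (x.seg 0 q) :=
        (r_seg0 x hdq').trans (r_seg0 x (dom_mono hqq' hdq')).symm
      rw [hrr, hlseg]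
      exact mem_image_of_mem _ (interior_subset hlN)
    · rw [d_seg0 x hdq']; exact hdq'
    · rw [d_seg0 x hdq']
  obtain ⟨_, h⟩ := hfalse.exists
  exact h

lemma tendsto_fac {α : Type*} {l : Filter α} {φ : α → Mor} {fL : Mor} {p q : Fin k → ℕ}
    (hconv : Tendsto φ l (𝓝 fL)) (hd : Λ.d fL = p + q) :
    Tendsto (fun a => fac Λ p q (φ a)) l (𝓝 (fac Λ p q fL)) := by
  refine (nhds_basis_opens (fac Λ p q fL)).tendsto_right_iff.mpr ?_
  rintro O ⟨hmemO, hO⟩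
  set T : Set {pp : Mor × Mor // Λ.s pp.1 = Λ.r pp.2} :=
    Subtype.val ⁻¹' (O ∩ ((Λ.d ⁻¹' {p}) ×ˢ (Λ.d ⁻¹' {q}))) with hT
  have hTopen : IsOpen T :=
    (hO.inter (((isOpen_discrete _).preimage Λ.continuous_d).prod
      ((isOpen_discrete _).preimage Λ.continuous_d))).preimage continuous_subtype_val
  set J : Set Mor :=
    (fun pp : {pp : Mor × Mor // Λ.s pp.1 = Λ.r pp.2} => Λ.comp pp.1.1 pp.1.2 pp.2) '' T
    with hJ
  have hJopen : IsOpen J := Λ.isOpenMap_comp T hTopen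
  obtain ⟨eL, hcL, hpL, hqL⟩ := fac_spec (Λ := Λ) hd
  have hfLJ : fL ∈ J := ⟨⟨fac Λ p q fL, eL⟩, ⟨hmemO, hpL, hqL⟩, hcL⟩
  have hev : ∀ᶠ a in l, φ a ∈ J := hconv (hJopen.mem_nhds hfLJ)
  refine hev.mono ?_
  rintro a ⟨⟨gh, e⟩, ⟨hO', hdp, hdq⟩, hcomp⟩
  have hda : Λ.d (φ a) = p + q := by
    rw [← hcomp, Λ.d_comp]
    have hdp' : Λ.d gh.1 = p := hdp
    have hdq' : Λ.d gh.2 = q := hdq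
    rw [hdp', hdq']
  rw [fac_eq hda hcomp hdp hdq]
  simpa using hO'

lemma tendsto_seg {α : Type*} {l : Filter α} {φ : α → KPath Λ} {xL : KPath Λ}
    (hconv : Tendsto φ l (@nhds _ (pathTopology Λ) xL)) {p u : Fin k → ℕ}
    (hpu : p ≤ u) (hdom : xL.dom u) :
    Tendsto (fun a => (φ a).seg p u) l (𝓝 (xL.seg p u)) := by
  obtain ⟨h0, hevdom⟩ := tendsto_seg_zero hconv hdom
  have hdu : Λ.d (xL.seg 0 u) = p + (u - p) := by
    rw [d_seg0 xL hdom]; funext i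
    have h9 : p i ≤ u i := hpu i
    simp only [Pi.add_apply, Pi.sub_apply]
    omega
  have hkey : ∀ x : KPath Λ, x.dom u →
      fac Λ p (u - p) (x.seg 0 u) = (x.seg 0 p, x.seg p u) := by
    intro x hx
    obtain ⟨e, ec⟩ := x.seg_comp 0 p u (pi_zero_le p) hpu hx
    refine fac_eq ?_ ec (d_seg0 x (dom_mono hpu hx)) (x.d_seg p u hpu hx)
    rw [d_seg0 x hx]; funext i
    have h9 : p i ≤ u i := hpu i
    simp only [Pi.add_apply, Pi.sub_apply]
    omega
  have hfac := tendsto_fac h0 hdu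
  rw [hkey xL hdom] at hfac
  have hsnd := (continuous_snd.tendsto (xL.seg 0 p, xL.seg p u)).comp hfac
  refine hsnd.congr' ?_
  filter_upwards [hevdom] with a ha
  show (fac Λ p (u - p) ((φ a).seg 0 u)).2 = (φ a).seg p u
  rw [hkey (φ a) ha]
end Aux5
section Aux6
open TKG Filter Topology TopologicalSpace

variable {k : ℕ} {Obj Mor : Type} [TopologicalSpace Obj] [TopologicalSpace Mor]
variable {Λ : TopKGraph k Obj Mor}

lemma s_match_of_tails {x y : KPath Λ} {p : Fin k → ℕ} (hdx : x.dom p) (hdy : y.dom p)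
    (ht : TailsEq p x y) : Λ.s (x.seg 0 p) = Λ.s (y.seg 0 p) := by
  rw [s_eq_r_mid x (le_refl p) hdx, s_eq_r_mid y (le_refl p) hdy, ht p (le_refl p) hdx]

lemma le_nhds_generateFrom' {X : Type*} {g : Set (Set X)} {a : X} {f : Filter X}
    (h : ∀ s ∈ g, a ∈ s → s ∈ f) : f ≤ @nhds _ (TopologicalSpace.generateFrom g) a := by
  rw [nhds_generateFrom]
  refine le_iInf₂ ?_
  rintro s ⟨has, hsg⟩
  exact Filter.le_principal_iff.mpr (h s hsg has)

end Aux6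

open TKG Filter Topology TopologicalSpace in
theorem Hm_proper'
    {k : ℕ} {Obj Mor : Type} [TopologicalSpace Obj] [TopologicalSpace Mor]
    (Λ : TopKGraph k Obj Mor) (hp : ProperGraph Λ) (m : Fin k → ℕ)
    (K : Set (KPath Λ × KPath Λ))
    (hK : @IsCompact _ (@instTopologicalSpaceProd _ _ (pathTopology Λ) (pathTopology Λ)) K)
    (hKb : K ⊆ {x : KPath Λ | IsBoundary x} ×ˢ {x : KPath Λ | IsBoundary x}) :
    @IsCompact _ (groupoidTopology Λ)
      {t | t ∈ Hset Λ m ∧ (t.1, t.2.2) ∈ K} := by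
  classical
  haveI hT2M := Λ.t2Mor
  haveI hT2O := Λ.t2Obj
  letI tp : TopologicalSpace (KPath Λ) := pathTopology Λ
  rw [@isCompact_iff_ultrafilter_le_nhds _ (groupoidTopology Λ)]
  intro f hf
  have hSf : {t : GTriple Λ | t ∈ Hset Λ m ∧ (t.1, t.2.2) ∈ K} ∈ f :=
    Filter.le_principal_iff.mp hf
  -- pick a level n via the finite partition of possible degrees
  have hcover : {t : GTriple Λ | t ∈ Hset Λ m ∧ (t.1, t.2.2) ∈ K} ⊆
      ⋃ n ∈ Set.Icc (0 : Fin k → ℕ) m,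
        ({t : GTriple Λ | t ∈ Hset Λ m ∧ (t.1, t.2.2) ∈ K} ∩ {t | Good n t}) := by
    intro t ht
    obtain ⟨n, hnm, hg⟩ := good_of_mem ht.1
    exact Set.mem_biUnion ⟨pi_zero_le n, hnm⟩ ⟨ht, hg⟩
  have hfin : (Set.Icc (0 : Fin k → ℕ) m).Finite := Set.finite_Icc _ _
  obtain ⟨n, hn_mem, hSn⟩ := (Ultrafilter.finite_biUnion_mem_iff hfin).mp
    (Filter.mem_of_superset hSf hcover)
  have hnm : n ≤ m := hn_mem.2
  have hev_good : ∀ᶠ t in (f : Filter (GTriple Λ)),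
      (t ∈ Hset Λ m ∧ (t.1, t.2.2) ∈ K) ∧ Good n t := by
    filter_upwards [hSn] with t ht
    exact ⟨ht.1, ht.2⟩
  -- limit of the (range, source) pair in K
  have hKmem : K ∈ Ultrafilter.map (fun t : GTriple Λ => (t.1, t.2.2)) f := by
    rw [Ultrafilter.mem_map]
    filter_upwards [hev_good] with t ht
    exact ht.1.2
  obtain ⟨⟨x0, y0⟩, hxyK, hxylim⟩ := isCompact_iff_ultrafilter_le_nhds.mp hK
    (Ultrafilter.map (fun t : GTriple Λ => (t.1, t.2.2)) f)
    (Filter.le_principal_iff.mpr hKmem)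
  have hFx : Tendsto (fun t : GTriple Λ => t.1) f (𝓝 x0) :=
    (continuous_fst.tendsto (x0, y0)).comp hxylim
  have hFy : Tendsto (fun t : GTriple Λ => t.2.2) f (𝓝 y0) :=
    (continuous_snd.tendsto (x0, y0)).comp hxylim
  have hbx : IsBoundary x0 := (hKb hxyK).1
  have hby : IsBoundary y0 := (hKb hxyK).2
  haveI hnbx : ((f : Filter (GTriple Λ)).map (fun t : GTriple Λ => t.1)).NeBot :=
    f.neBot.map _
  haveI hnby : ((f : Filter (GTriple Λ)).map (fun t : GTriple Λ => t.2.2)).NeBot :=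
    f.neBot.map _
  have hdomlim_x : ∀ u : Fin k → ℕ, (∀ᶠ t in (f : Filter (GTriple Λ)), t.1.dom u) →
      x0.dom u := fun u hev => dom_of_limit hp hFx (eventually_map.mpr hev)
  have hdomlim_y : ∀ u : Fin k → ℕ, (∀ᶠ t in (f : Filter (GTriple Λ)), t.2.2.dom u) →
      y0.dom u := fun u hev => dom_of_limit hp hFy (eventually_map.mpr hev)
  have hev_dom_n : ∀ᶠ t in (f : Filter (GTriple Λ)), t.1.dom n :=
    hev_good.mono (fun t ht => ht.2.2.1)
  have hev_degeq : ∀ᶠ t in (f : Filter (GTriple Λ)), ∀ i, t.1.deg i = t.2.2.deg i :=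
    hev_good.mono (fun t ht => ht.2.1)
  have hev_tails : ∀ᶠ t in (f : Filter (GTriple Λ)), TailsEq n t.1 t.2.2 :=
    hev_good.mono (fun t ht => ht.2.2.2)
  have hev_zero : ∀ᶠ t in (f : Filter (GTriple Λ)), t.2.1 = 0 :=
    hev_good.mono (fun t ht => ht.1.1.2.2.2.1)
  have hx0n : x0.dom n := hdomlim_x n hev_dom_n
  -- the degrees of x0 and y0 agree
  have hdege : ∀ i, x0.deg i = y0.deg i := by
    intro i
    refine le_antisymm ?_ ?_
    · by_contra hcon
      have hlt : y0.deg i < x0.deg i := lt_of_not_ge (fun h => hcon h)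
      have hne' : y0.deg i ≠ ⊤ := ne_top_of_lt hlt
      have hcc : ((y0.deg i).toNat : ℕ∞) = y0.deg i := ENat.coe_toNat hne'
      have hc1 : (((y0.deg i).toNat + 1 : ℕ) : ℕ∞) ≤ x0.deg i := by
        push_cast
        rw [hcc]
        exact (ENat.add_one_le_iff hne').mpr hlt
      set qc : Fin k → ℕ := Function.update (0 : Fin k → ℕ) i ((y0.deg i).toNat + 1)
        with hqc
      have hx0qc : x0.dom qc := by
        intro j
        rcases eq_or_ne j i with rfl | hj
        · rw [hqc, Function.update_self]; exact hc1
        · rw [hqc, Function.update_of_ne hj]; simp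
      have hevy : ∀ᶠ t in (f : Filter (GTriple Λ)), t.2.2.dom qc := by
        filter_upwards [(tendsto_seg_zero hFx hx0qc).2, hev_degeq] with t h1 h2
        exact dom_of_deg_eq (fun j => (h2 j).symm) h1
      have hy0qc : y0.dom qc := hdomlim_y qc hevy
      have h3 := hy0qc i
      rw [hqc, Function.update_self] at h3
      have h4 : (((y0.deg i).toNat + 1 : ℕ) : ℕ∞) ≤ ((y0.deg i).toNat : ℕ∞) :=
        le_trans h3 (le_of_eq hcc.symm)
      have h5 : (y0.deg i).toNat + 1 ≤ (y0.deg i).toNat := by exact_mod_cast h4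
      omega
    · by_contra hcon
      have hlt : x0.deg i < y0.deg i := lt_of_not_ge (fun h => hcon h)
      have hne' : x0.deg i ≠ ⊤ := ne_top_of_lt hlt
      have hcc : ((x0.deg i).toNat : ℕ∞) = x0.deg i := ENat.coe_toNat hne'
      have hc1 : (((x0.deg i).toNat + 1 : ℕ) : ℕ∞) ≤ y0.deg i := by
        push_cast
        rw [hcc]
        exact (ENat.add_one_le_iff hne').mpr hlt
      set qc : Fin k → ℕ := Function.update (0 : Fin k → ℕ) i ((x0.deg i).toNat + 1)
        with hqc
      have hy0qc : y0.dom qc := by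
        intro j
        rcases eq_or_ne j i with rfl | hj
        · rw [hqc, Function.update_self]; exact hc1
        · rw [hqc, Function.update_of_ne hj]; simp
      have hevx : ∀ᶠ t in (f : Filter (GTriple Λ)), t.1.dom qc := by
        filter_upwards [(tendsto_seg_zero hFy hy0qc).2, hev_degeq] with t h1 h2
        exact dom_of_deg_eq (fun j => h2 j) h1
      have hx0qc : x0.dom qc := hdomlim_x qc hevx
      have h3 := hx0qc i
      rw [hqc, Function.update_self] at h3
      have h4 : (((x0.deg i).toNat + 1 : ℕ) : ℕ∞) ≤ ((x0.deg i).toNat : ℕ∞) :=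
        le_trans h3 (le_of_eq hcc.symm)
      have h5 : (x0.deg i).toNat + 1 ≤ (x0.deg i).toNat := by exact_mod_cast h4
      omega
  have tails_lim : ∀ p' : Fin k → ℕ, x0.dom p' →
      (∀ᶠ t in (f : Filter (GTriple Λ)), TailsEq p' t.1 t.2.2) → TailsEq p' x0 y0 := by
    intro p' _ hevtl u hpu hx0u
    have hy0u : y0.dom u := dom_of_deg_eq (fun i => (hdege i).symm) hx0u
    have hevdu : ∀ᶠ t in (f : Filter (GTriple Λ)), t.1.dom u :=
      (tendsto_seg_zero hFx hx0u).2
    have T1 : Tendsto (fun t : GTriple Λ => t.1.seg p' u) f (𝓝 (x0.seg p' u)) :=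
      tendsto_seg hFx hpu hx0u
    have T2 : Tendsto (fun t : GTriple Λ => t.2.2.seg p' u) f (𝓝 (y0.seg p' u)) :=
      tendsto_seg hFy hpu hy0u
    have heq : (fun t : GTriple Λ => t.2.2.seg p' u) =ᶠ[(f : Filter (GTriple Λ))]
        (fun t => t.1.seg p' u) := by
      filter_upwards [hevtl, hevdu] with t h1 h2
      exact h1 u hpu h2
    exact tendsto_nhds_unique (T2.congr' heq) T1
  have htailsn : TailsEq n x0 y0 := tails_lim n hx0n hev_tails
  have hGood0 : Good n ((x0, (0 : Fin k → ℤ), y0) : GTriple Λ) := ⟨hdege, hx0n, htailsn⟩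
  refine ⟨((x0, (0 : Fin k → ℤ), y0) : GTriple Λ),
    ⟨mem_Hset_of_good hnm hGood0 rfl hbx hby, hxyK⟩, ?_⟩
  -- convergence in the groupoid topology
  refine le_nhds_generateFrom' ?_
  rintro s ⟨m', U, V, F, hU, hV, hF, rfl⟩ ⟨hmemZG, hnotF⟩
  have hm0 : m' = 0 := by
    have h1 : (0 : Fin k → ℤ) = m' := hmemZG.1
    exact h1.symm
  subst hm0
  refine Filter.inter_mem ?_ ?_
  · -- Part A : positive part
    obtain ⟨p', hdx0, hdy0, hdeg0, htl0, hWmem, -⟩ := of_mem_ZG hmemZG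
    have hUx : x0.seg 0 p' ∈ U := hWmem.1.1
    have hVy : y0.seg 0 p' ∈ V := hWmem.1.2
    have hx0u0 : x0.dom (p' ⊔ n) := dom_sup hdx0 hx0n
    have hy0u0 : y0.dom (p' ⊔ n) := dom_of_deg_eq (fun i => (hdege i).symm) hx0u0
    have hevdp' : ∀ᶠ t in (f : Filter (GTriple Λ)), t.1.dom p' ∧ t.1.seg 0 p' ∈ U :=
      ((tendsto_seg_zero hFx hdx0).2).and ((tendsto_seg_zero hFx hdx0).1 (hU.mem_nhds hUx))
    have hevdyp' : ∀ᶠ t in (f : Filter (GTriple Λ)), t.2.2.dom p' ∧ t.2.2.seg 0 p' ∈ V :=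
      ((tendsto_seg_zero hFy hdy0).2).and ((tendsto_seg_zero hFy hdy0).1 (hV.mem_nhds hVy))
    have TA : Tendsto (fun t : GTriple Λ => t.1.seg p' (p' ⊔ n)) f
        (𝓝 (x0.seg p' (p' ⊔ n))) := tendsto_seg hFx le_sup_left hx0u0
    have TB : Tendsto (fun t : GTriple Λ => t.2.2.seg p' (p' ⊔ n)) f
        (𝓝 (y0.seg p' (p' ⊔ n))) := tendsto_seg hFy le_sup_left hy0u0
    have hlimeq : y0.seg p' (p' ⊔ n) = x0.seg p' (p' ⊔ n) := htl0 (p' ⊔ n) le_sup_left hx0u0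
    obtain ⟨e, hgmem, hse⟩ := Λ.isLocalHomeomorph_s (x0.seg p' (p' ⊔ n))
    have hevsrc1 : ∀ᶠ t in (f : Filter (GTriple Λ)), t.1.seg p' (p' ⊔ n) ∈ e.source :=
      TA (e.open_source.mem_nhds hgmem)
    have hevsrc2 : ∀ᶠ t in (f : Filter (GTriple Λ)), t.2.2.seg p' (p' ⊔ n) ∈ e.source := by
      have hy : y0.seg p' (p' ⊔ n) ∈ e.source := by rw [hlimeq]; exact hgmem
      exact TB (e.open_source.mem_nhds hy)
    have hevs : ∀ᶠ t in (f : Filter (GTriple Λ)),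
        Λ.s (t.1.seg p' (p' ⊔ n)) = Λ.s (t.2.2.seg p' (p' ⊔ n)) := by
      filter_upwards [hev_good, hevdp'] with t hg hdp
      obtain ⟨hdegt, hdnt, htlt⟩ := hg.2
      have hdu0 : t.1.dom (p' ⊔ n) := dom_sup hdp.1 hdnt
      have hdu0' : t.2.2.dom (p' ⊔ n) := dom_of_deg_eq (fun i => (hdegt i).symm) hdu0
      calc Λ.s (t.1.seg p' (p' ⊔ n)) = Λ.s (t.1.seg 0 (p' ⊔ n)) :=
            (s_seg_left t.1 le_sup_left hdu0).symm
        _ = Λ.s (t.1.seg n (p' ⊔ n)) := s_seg_left t.1 le_sup_right hdu0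
        _ = Λ.s (t.2.2.seg n (p' ⊔ n)) := by rw [htlt (p' ⊔ n) le_sup_right hdu0]
        _ = Λ.s (t.2.2.seg 0 (p' ⊔ n)) := (s_seg_left t.2.2 le_sup_right hdu0').symm
        _ = Λ.s (t.2.2.seg p' (p' ⊔ n)) := s_seg_left t.2.2 le_sup_left hdu0'
    have heveq : ∀ᶠ t in (f : Filter (GTriple Λ)),
        t.2.2.seg p' (p' ⊔ n) = t.1.seg p' (p' ⊔ n) := by
      filter_upwards [hevsrc1, hevsrc2, hevs] with t h1 h2 h3
      refine e.injOn h2 h1 ?_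
      show e (t.2.2.seg p' (p' ⊔ n)) = e (t.1.seg p' (p' ⊔ n))
      rw [← congrFun hse, ← congrFun hse]
      exact h3.symm
    have hevtl' : ∀ᶠ t in (f : Filter (GTriple Λ)), TailsEq p' t.1 t.2.2 := by
      filter_upwards [hev_good, heveq] with t hg heq
      exact tails_eq_from (fun i => (hg.2.1 i).symm) (hg.2.2.1) (hg.2.2.2) heq
    have hevZG : ∀ᶠ t in (f : Filter (GTriple Λ)),
        t ∈ ZG Λ ((U ×ˢ V) ∩ {lm : Mor × Mor | Λ.s lm.1 = Λ.s lm.2}) 0 := by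
      filter_upwards [hev_good, hevdp', hevdyp', hevtl'] with t hg hdxU hdyV htl
      have h0t : t.2.1 = 0 := hg.1.1.2.2.2.1
      exact mem_ZG_of h0t hdxU.1 hdyV.1 hg.2.1 htl
        ⟨⟨hdxU.2, hdyV.2⟩, s_match_of_tails hdxU.1 hdyV.1 htl⟩
    rwa [Filter.eventually_iff, Set.setOf_mem_eq] at hevZG
  · -- Part B : complement of the compact part
    by_contra hnotin
    have hZGF : ZG Λ F 0 ∈ f := by
      by_contra h2
      exact hnotin (Ultrafilter.compl_mem_iff_notMem.mpr h2)
    have hDfin : ((fun lm : Mor × Mor => Λ.d lm.1) '' F).Finite :=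
      isCompact_iff_finite.mp (hF.image (Λ.continuous_d.comp continuous_fst))
    have hcov : ZG Λ F 0 ⊆ ⋃ p ∈ ((fun lm : Mor × Mor => Λ.d lm.1) '' F),
        {t : GTriple Λ | t.1.dom p ∧ t.2.2.dom p ∧ (∀ i, t.1.deg i = t.2.2.deg i) ∧
          TailsEq p t.1 t.2.2 ∧ (t.1.seg 0 p, t.2.2.seg 0 p) ∈ F ∧ t.2.1 = 0} := by
      intro t ht
      obtain ⟨p, h1, h2, h3, h4, h5, h6⟩ := of_mem_ZG ht
      exact Set.mem_biUnion ⟨(t.1.seg 0 p, t.2.2.seg 0 p), h5, d_seg0 t.1 h1⟩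
        ⟨h1, h2, h3, h4, h5, h6⟩
    obtain ⟨p', _, hBm⟩ := (Ultrafilter.finite_biUnion_mem_iff hDfin).mp
      (Filter.mem_of_superset hZGF hcov)
    have hevB : ∀ᶠ t in (f : Filter (GTriple Λ)),
        t.1.dom p' ∧ t.2.2.dom p' ∧ (∀ i, t.1.deg i = t.2.2.deg i) ∧
        TailsEq p' t.1 t.2.2 ∧ (t.1.seg 0 p', t.2.2.seg 0 p') ∈ F ∧ t.2.1 = 0 := by
      filter_upwards [hBm] with t ht
      exact ht
    have hx0p' : x0.dom p' := hdomlim_x p' (hevB.mono fun t ht => ht.1)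
    have hy0p' : y0.dom p' := dom_of_deg_eq (fun i => (hdege i).symm) hx0p'
    have htl' : TailsEq p' x0 y0 := tails_lim p' hx0p' (hevB.mono fun t ht => ht.2.2.2.1)
    have hTF : Tendsto (fun t : GTriple Λ => (t.1.seg 0 p', t.2.2.seg 0 p')) f
        (𝓝 (x0.seg 0 p', y0.seg 0 p')) :=
      ((tendsto_seg_zero hFx hx0p').1).prodMk_nhds ((tendsto_seg_zero hFy hy0p').1)
    have hFmem : (x0.seg 0 p', y0.seg 0 p') ∈ F :=
      hF.isClosed.mem_of_tendsto hTF (hevB.mono fun t ht => ht.2.2.2.2.1)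
    exact hnotF (mem_ZG_of rfl hx0p' hy0p' hdege htl' hFmem)

open TKG in
/-- For a proper topological `k`-graph, the subgroupoid `H(m)` of the boundary-path
groupoid is a proper groupoid: the preimage under `(r,s)` of any compact subset of
`∂Λ × ∂Λ` is compact. -/
theorem Hm_proper
    {k : ℕ} {Obj Mor : Type} [TopologicalSpace Obj] [TopologicalSpace Mor]
    (Λ : TopKGraph k Obj Mor) (hp : ProperGraph Λ) (m : Fin k → ℕ)
    (K : Set (KPath Λ × KPath Λ))
    (hK : @IsCompact _ (@instTopologicalSpaceProd _ _ (pathTopology Λ) (pathTopology Λ)) K)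
    (hKb : K ⊆ {x : KPath Λ | IsBoundary x} ×ˢ {x : KPath Λ | IsBoundary x}) :
    @IsCompact _ (groupoidTopology Λ)
      {t | t ∈ Hset Λ m ∧ (t.1, t.2.2) ∈ K} :=
  Hm_proper' Λ hp m K hK hKb
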